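/- Let X1, X2, X3, U1, U2, U3 be discrete random variables whose joint law factorizes as P_{X1,X2,X3} · P_{U1|X1} · P_{U2|X2} · P_{U3|X3}. Then I(U1; X1 | U2, U3) + I(X2,X3; U2,U3 | U1) ≤ I(X1,X2,X3; U1,U2,U3). -/
import Mathlib


open Real
open scoped BigOperators Classical

noncomputable section

/-- Shannon entropy of a pmf on a finite alphabet. -/
def ent {α : Type*} [Fintype α] (p : α → ℝ) : ℝ := -∑ x, p x * Real.log (p x)

/-- Kullback–Leibler divergence between pmfs on a finite alphabet. -/
def kl {α : Type*} [Fintype α] (p q : α → ℝ) : ℝ := ∑ x, p x * Real.log (p x / q x)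

/-- Marginal pmf of the random variable `f` under joint pmf `p`. -/
def margOf {Ω α : Type*} [Fintype Ω] (p : Ω → ℝ) (f : Ω → α) (a : α) : ℝ :=
  ∑ ω, if f ω = a then p ω else 0

/-- Entropy of the random variable `f` under joint pmf `p`. -/
def entOf {Ω α : Type*} [Fintype Ω] [Fintype α] (p : Ω → ℝ) (f : Ω → α) : ℝ :=
  ent (margOf p f)

/-- Conditional entropy `H(f | g)` under joint pmf `p`. -/
def condEntOf {Ω α β : Type*} [Fintype Ω] [Fintype α] [Fintype β]
    (p : Ω → ℝ) (f : Ω → α) (g : Ω → β) : ℝ :=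
  entOf p (fun ω => (g ω, f ω)) - entOf p g

/-- Mutual information `I(f ; g)` under joint pmf `p`. -/
def miOf {Ω α β : Type*} [Fintype Ω] [Fintype α] [Fintype β]
    (p : Ω → ℝ) (f : Ω → α) (g : Ω → β) : ℝ :=
  entOf p f + entOf p g - entOf p (fun ω => (f ω, g ω))

/-- Conditional mutual information `I(f ; g | h)` under joint pmf `p`. -/
def cmiOf {Ω α β γ : Type*} [Fintype Ω] [Fintype α] [Fintype β] [Fintype γ]
    (p : Ω → ℝ) (f : Ω → α) (g : Ω → β) (h : Ω → γ) : ℝ :=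
  entOf p (fun ω => (h ω, f ω)) + entOf p (fun ω => (h ω, g ω))
    - entOf p (fun ω => (h ω, f ω, g ω)) - entOf p h

section AuxStmt11

set_option linter.unusedSectionVars false

variable {Ω α β : Type*} [Fintype Ω] [Fintype α] [Fintype β]

lemma margOf_nonneg' (p : Ω → ℝ) (hp : ∀ ω, 0 ≤ p ω) (f : Ω → α) (a : α) :
    0 ≤ margOf p f a := by
  refine Finset.sum_nonneg fun ω _ => ?_
  by_cases h : f ω = a <;> simp [h, hp ω]

lemma self_le_margOf (p : Ω → ℝ) (hp : ∀ ω, 0 ≤ p ω) (f : Ω → α) (ω : Ω) :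
    p ω ≤ margOf p f (f ω) := by
  have h := Finset.single_le_sum (f := fun ω' => if f ω' = f ω then p ω' else 0)
    (fun i _ => by by_cases h : f i = f ω <;> simp [h, hp i]) (Finset.mem_univ ω)
  simpa [margOf] using h

lemma margOf_le_comp (p : Ω → ℝ) (hp : ∀ ω, 0 ≤ p ω) (f : Ω → α) (g : α → β) (a : α) :
    margOf p f a ≤ margOf p (fun ω => g (f ω)) (g a) := by
  refine Finset.sum_le_sum fun ω _ => ?_
  by_cases h : f ω = a
  · simp [h]
  · by_cases h2 : g (f ω) = g a <;> simp [h, h2, hp ω]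

lemma sum_margOf (p : Ω → ℝ) (f : Ω → α) : ∑ a, margOf p f a = ∑ ω, p ω := by
  simp only [margOf]
  rw [Finset.sum_comm]
  simp

lemma sum_mul_comp (p : Ω → ℝ) (f : Ω → α) (g : α → ℝ) :
    ∑ ω, p ω * g (f ω) = ∑ a, margOf p f a * g a := by
  calc ∑ ω, p ω * g (f ω) = ∑ ω, ∑ a, (if f ω = a then p ω * g a else 0) := by simp
    _ = ∑ a, ∑ ω, (if f ω = a then p ω * g a else 0) := Finset.sum_comm
    _ = ∑ a, margOf p f a * g a := by
        refine Finset.sum_congr rfl fun a _ => ?_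
        rw [margOf, Finset.sum_mul]
        exact Finset.sum_congr rfl fun ω _ => by by_cases h : f ω = a <;> simp [h]

lemma entOf_eq_sum (p : Ω → ℝ) (f : Ω → α) :
    entOf p f = -∑ ω, p ω * Real.log (margOf p f (f ω)) := by
  rw [entOf, ent, sum_mul_comp p f (fun a => Real.log (margOf p f a))]

lemma margOf_injective (p : Ω → ℝ) (f : Ω → α) (hf : Function.Injective f) (ω : Ω) :
    margOf p f (f ω) = p ω := by
  rw [margOf]
  rw [Finset.sum_eq_single ω]
  · simp
  · intro b _ hb
    rw [if_neg (fun h => hb (hf h))]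
  · simp

lemma gibbs {α : Type*} [Fintype α] (q r : α → ℝ) (hq : ∀ a, 0 ≤ q a)
    (hr : ∀ a, 0 ≤ r a) (hq1 : ∑ a, q a = 1) (hr1 : ∑ a, r a ≤ 1)
    (hsupp : ∀ a, 0 < q a → 0 < r a) :
    0 ≤ ∑ a, q a * Real.log (q a / r a) := by
  have key : ∑ a, q a * Real.log (r a / q a) ≤ 0 := by
    have h1 : ∑ a, q a * Real.log (r a / q a) ≤ ∑ a, (r a - q a) := by
      refine Finset.sum_le_sum fun a _ => ?_
      rcases eq_or_lt_of_le (hq a) with h | h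
      · simp [← h, hr a]
      · have hra := hsupp a h
        have hlog := Real.log_le_sub_one_of_pos (div_pos hra h)
        have := mul_le_mul_of_nonneg_left hlog (le_of_lt h)
        calc q a * Real.log (r a / q a) ≤ q a * (r a / q a - 1) := this
          _ = r a - q a := by field_simp
    have h2 : ∑ a, (r a - q a) ≤ 0 := by
      rw [Finset.sum_sub_distrib, hq1]; linarith
    linarith
  have heq : ∑ a, q a * Real.log (q a / r a) = -∑ a, q a * Real.log (r a / q a) := by
    rw [← Finset.sum_neg_distrib]
    refine Finset.sum_congr rfl fun a _ => ?_
    rcases eq_or_lt_of_le (hq a) with h | h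
    · simp [← h]
    · have hra := hsupp a h
      rw [Real.log_div (ne_of_gt hra) (ne_of_gt h), Real.log_div (ne_of_gt h) (ne_of_gt hra)]
      ring
  rw [heq]
  linarith

end AuxStmt11

/-- Under the factorization `P_{X1X2X3}·P_{U1|X1}·P_{U2|X2}·P_{U3|X3}`,
`I(U1;X1|U2,U3) + I(X2,X3;U2,U3|U1) ≤ I(X1,X2,X3;U1,U2,U3)`. -/
theorem stmt11 {X1 X2 X3 U1 U2 U3 : Type*}
    [Fintype X1] [Fintype X2] [Fintype X3]
    [Fintype U1] [Fintype U2] [Fintype U3]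
    (pJ : X1 × X2 × X3 → ℝ) (hpJ0 : ∀ v, 0 ≤ pJ v) (hpJ1 : ∑ v, pJ v = 1)
    (k1 : X1 → U1 → ℝ) (hk10 : ∀ x u, 0 ≤ k1 x u) (hk11 : ∀ x, ∑ u, k1 x u = 1)
    (k2 : X2 → U2 → ℝ) (hk20 : ∀ x u, 0 ≤ k2 x u) (hk21 : ∀ x, ∑ u, k2 x u = 1)
    (k3 : X3 → U3 → ℝ) (hk30 : ∀ x u, 0 ≤ k3 x u) (hk31 : ∀ x, ∑ u, k3 x u = 1)
    (p : X1 × X2 × X3 × U1 × U2 × U3 → ℝ)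
    (hp : ∀ x1 x2 x3 u1 u2 u3,
      p (x1, x2, x3, u1, u2, u3)
        = pJ (x1, x2, x3) * k1 x1 u1 * k2 x2 u2 * k3 x3 u3) :
    cmiOf p (fun ω => ω.2.2.2.1) (fun ω => ω.1)
        (fun ω => (ω.2.2.2.2.1, ω.2.2.2.2.2))
      + cmiOf p (fun ω => (ω.2.1, ω.2.2.1))
          (fun ω => (ω.2.2.2.2.1, ω.2.2.2.2.2)) (fun ω => ω.2.2.2.1)
      ≤ miOf p (fun ω => (ω.1, ω.2.1, ω.2.2.1))
          (fun ω => (ω.2.2.2.1, ω.2.2.2.2.1, ω.2.2.2.2.2)) := by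
  classical
  -- nonnegativity of p
  have hp0 : ∀ ω, 0 ≤ p ω := by
    rintro ⟨x1, x2, x3, u1, u2, u3⟩
    rw [hp]
    have := hpJ0 (x1, x2, x3)
    have := hk10 x1 u1
    have := hk20 x2 u2
    have := hk30 x3 u3
    positivity
  have hp' : ∀ ω : X1 × X2 × X3 × U1 × U2 × U3,
      p ω = pJ (ω.1, ω.2.1, ω.2.2.1) * k1 ω.1 ω.2.2.2.1 * k2 ω.2.1 ω.2.2.2.2.1
        * k3 ω.2.2.1 ω.2.2.2.2.2 := by
    rintro ⟨x1, x2, x3, u1, u2, u3⟩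
    exact hp x1 x2 x3 u1 u2 u3
  -- total mass
  have hsum : ∑ ω, p ω = 1 := by
    simp only [Fintype.sum_prod_type, hp]
    simp [← Finset.mul_sum, hk11, hk21, hk31]
    simpa [Fintype.sum_prod_type] using hpJ1
  -- marginal identities
  have MA : ∀ v : X1 × X2 × X3, margOf p (fun ω => (ω.1, ω.2.1, ω.2.2.1)) v = pJ v := by
    rintro ⟨y1, y2, y3⟩
    simp only [margOf, Fintype.sum_prod_type, hp, Prod.mk.injEq, ite_and]
    simp [Finset.sum_ite_eq, Finset.sum_ite_eq', mul_ite]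
    simp [← Finset.mul_sum, hk11, hk21, hk31]
  have MF : ∀ (v2 : U2) (v3 : U3) (w1 : U1) (y1 : X1),
      margOf p (fun ω => ((ω.2.2.2.2.1, ω.2.2.2.2.2), ω.2.2.2.1, ω.1)) ((v2,v3),w1,y1)
        = k1 y1 w1 * margOf p (fun ω => ((ω.2.2.2.2.1, ω.2.2.2.2.2), ω.1)) ((v2,v3),y1) := by
    intro v2 v3 w1 y1
    simp only [margOf, Fintype.sum_prod_type, hp, Prod.mk.injEq, ite_and, Finset.mul_sum]
    simp [Finset.sum_ite_eq, Finset.sum_ite_eq', Finset.mul_sum, mul_ite]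
    refine Finset.sum_congr rfl fun x2 _ => Finset.sum_congr rfl fun x3 _ => ?_
    have h : ∑ u1 : U1, k1 y1 w1 * (pJ (y1,x2,x3) * k1 y1 u1 * k2 x2 v2 * k3 x3 v3)
         = (k1 y1 w1 * (pJ (y1,x2,x3) * k2 x2 v2 * k3 x3 v3)) * ∑ u1, k1 y1 u1 := by
      rw [Finset.mul_sum]; exact Finset.sum_congr rfl fun u1 _ => by ring
    rw [h, hk11]; ring
  have MJ : ∀ (w1 : U1) (y2 : X2) (y3 : X3) (v2 : U2) (v3 : U3),
      margOf p (fun ω => (ω.2.2.2.1, (ω.2.1, ω.2.2.1), (ω.2.2.2.2.1, ω.2.2.2.2.2)))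
          (w1, (y2, y3), (v2, v3))
        = k2 y2 v2 * k3 y3 v3
          * margOf p (fun ω => (ω.2.2.2.1, (ω.2.1, ω.2.2.1))) (w1, (y2, y3)) := by
    intro w1 y2 y3 v2 v3
    simp only [margOf, Fintype.sum_prod_type, hp, Prod.mk.injEq, ite_and, Finset.mul_sum]
    simp [← Finset.mul_sum, hk21, hk31]
    rw [Finset.mul_sum]
    exact Finset.sum_congr rfl fun x _ => by ring
  have MD : ∀ (w1 : U1) (v2 : U2) (v3 : U3),
      margOf p (fun ω => ((ω.2.2.2.2.1, ω.2.2.2.2.2), ω.2.2.2.1)) ((v2, v3), w1)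
        = margOf p (fun ω => (ω.2.2.2.1, ω.2.2.2.2.1, ω.2.2.2.2.2)) (w1, v2, v3) := by
    intro w1 v2 v3
    simp only [margOf, Fintype.sum_prod_type, hp, Prod.mk.injEq, ite_and]
    simp [Finset.sum_ite_eq, Finset.sum_ite_eq', mul_ite]
  have MI : ∀ (w1 : U1) (v2 : U2) (v3 : U3),
      margOf p (fun ω => (ω.2.2.2.1, (ω.2.2.2.2.1, ω.2.2.2.2.2))) (w1, (v2, v3))
        = margOf p (fun ω => (ω.2.2.2.1, ω.2.2.2.2.1, ω.2.2.2.2.2)) (w1, v2, v3) := by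
    intro w1 v2 v3
    simp only [margOf, Prod.mk.injEq, ite_and]
  have MC : ∀ ω : X1 × X2 × X3 × U1 × U2 × U3,
      margOf p (fun ω => ((ω.1, ω.2.1, ω.2.2.1), (ω.2.2.2.1, ω.2.2.2.2.1, ω.2.2.2.2.2)))
          ((ω.1, ω.2.1, ω.2.2.1), (ω.2.2.2.1, ω.2.2.2.2.1, ω.2.2.2.2.2)) = p ω := by
    intro ω
    exact margOf_injective p _ (by
      rintro ⟨a1, a2, a3, a4, a5, a6⟩ ⟨b1, b2, b3, b4, b5, b6⟩ h
      simp only [Prod.mk.injEq] at h ⊢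
      tauto) ω
  -- shorthand marginals
  have hQ0 : ∀ t, 0 ≤ margOf p (fun ω => (ω.2.2.2.1, ω.2.2.2.2.1, ω.2.2.2.2.2)) t :=
    margOf_nonneg' p hp0 _
  have hS0 : ∀ t, 0 ≤ margOf p (fun ω => ω.2.2.2.1) t := margOf_nonneg' p hp0 _
  have hR0 : ∀ t, 0 ≤ margOf p (fun ω => (ω.2.2.2.2.1, ω.2.2.2.2.2)) t := margOf_nonneg' p hp0 _
  rw [← sub_nonneg]
  have key : miOf p (fun ω => (ω.1, ω.2.1, ω.2.2.1))
          (fun ω => (ω.2.2.2.1, ω.2.2.2.2.1, ω.2.2.2.2.2))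
      - (cmiOf p (fun ω => ω.2.2.2.1) (fun ω => ω.1)
          (fun ω => (ω.2.2.2.2.1, ω.2.2.2.2.2))
        + cmiOf p (fun ω => (ω.2.1, ω.2.2.1))
          (fun ω => (ω.2.2.2.2.1, ω.2.2.2.2.2)) (fun ω => ω.2.2.2.1))
      = ∑ t : U1 × U2 × U3,
          margOf p (fun ω => (ω.2.2.2.1, ω.2.2.2.2.1, ω.2.2.2.2.2)) t
            * Real.log (margOf p (fun ω => (ω.2.2.2.1, ω.2.2.2.2.1, ω.2.2.2.2.2)) t
              / (margOf p (fun ω => ω.2.2.2.1) t.1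
                * margOf p (fun ω => (ω.2.2.2.2.1, ω.2.2.2.2.2)) t.2)) := by
    rw [← sum_mul_comp p (fun ω => (ω.2.2.2.1, ω.2.2.2.2.1, ω.2.2.2.2.2))
      (fun t => Real.log (margOf p (fun ω => (ω.2.2.2.1, ω.2.2.2.2.1, ω.2.2.2.2.2)) t
              / (margOf p (fun ω => ω.2.2.2.1) t.1
                * margOf p (fun ω => (ω.2.2.2.2.1, ω.2.2.2.2.2)) t.2)))]
    have step1 : miOf p (fun ω => (ω.1, ω.2.1, ω.2.2.1))
          (fun ω => (ω.2.2.2.1, ω.2.2.2.2.1, ω.2.2.2.2.2))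
      - (cmiOf p (fun ω => ω.2.2.2.1) (fun ω => ω.1)
          (fun ω => (ω.2.2.2.2.1, ω.2.2.2.2.2))
        + cmiOf p (fun ω => (ω.2.1, ω.2.2.1))
          (fun ω => (ω.2.2.2.2.1, ω.2.2.2.2.2)) (fun ω => ω.2.2.2.1))
      = ∑ ω, p ω * (
          Real.log (margOf p (fun ω => ((ω.1, ω.2.1, ω.2.2.1), (ω.2.2.2.1, ω.2.2.2.2.1, ω.2.2.2.2.2)))
            ((ω.1, ω.2.1, ω.2.2.1), (ω.2.2.2.1, ω.2.2.2.2.1, ω.2.2.2.2.2)))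
        + Real.log (margOf p (fun ω => ((ω.2.2.2.2.1, ω.2.2.2.2.2), ω.2.2.2.1))
            ((ω.2.2.2.2.1, ω.2.2.2.2.2), ω.2.2.2.1))
        + Real.log (margOf p (fun ω => ((ω.2.2.2.2.1, ω.2.2.2.2.2), ω.1))
            ((ω.2.2.2.2.1, ω.2.2.2.2.2), ω.1))
        + Real.log (margOf p (fun ω => (ω.2.2.2.1, (ω.2.1, ω.2.2.1)))
            (ω.2.2.2.1, (ω.2.1, ω.2.2.1)))
        + Real.log (margOf p (fun ω => (ω.2.2.2.1, (ω.2.2.2.2.1, ω.2.2.2.2.2)))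
            (ω.2.2.2.1, (ω.2.2.2.2.1, ω.2.2.2.2.2)))
        - Real.log (margOf p (fun ω => (ω.1, ω.2.1, ω.2.2.1)) (ω.1, ω.2.1, ω.2.2.1))
        - Real.log (margOf p (fun ω => (ω.2.2.2.1, ω.2.2.2.2.1, ω.2.2.2.2.2))
            (ω.2.2.2.1, ω.2.2.2.2.1, ω.2.2.2.2.2))
        - Real.log (margOf p (fun ω => ((ω.2.2.2.2.1, ω.2.2.2.2.2), ω.2.2.2.1, ω.1))
            ((ω.2.2.2.2.1, ω.2.2.2.2.2), ω.2.2.2.1, ω.1))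
        - Real.log (margOf p (fun ω => (ω.2.2.2.2.1, ω.2.2.2.2.2)) (ω.2.2.2.2.1, ω.2.2.2.2.2))
        - Real.log (margOf p (fun ω => (ω.2.2.2.1, (ω.2.1, ω.2.2.1), (ω.2.2.2.2.1, ω.2.2.2.2.2)))
            (ω.2.2.2.1, (ω.2.1, ω.2.2.1), (ω.2.2.2.2.1, ω.2.2.2.2.2)))
        - Real.log (margOf p (fun ω => ω.2.2.2.1) ω.2.2.2.1)) := by
      simp only [miOf, cmiOf, entOf_eq_sum]
      simp only [mul_add, mul_sub, Finset.sum_add_distrib, Finset.sum_sub_distrib]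
      ring
    rw [step1]
    refine Finset.sum_congr rfl fun ω _ => ?_
    rcases eq_or_lt_of_le (hp0 ω) with h0 | h0
    · rw [← h0]; ring
    · -- positivity of factors
      have hfac := hp' ω
      have hpJpos : 0 < pJ (ω.1, ω.2.1, ω.2.2.1) := by
        rcases (hpJ0 (ω.1, ω.2.1, ω.2.2.1)).lt_or_eq with h | h
        · exact h
        · rw [hfac, ← h] at h0; simp at h0
      have hk1pos : 0 < k1 ω.1 ω.2.2.2.1 := by
        rcases (hk10 ω.1 ω.2.2.2.1).lt_or_eq with h | h
        · exact h
        · rw [hfac, ← h] at h0; simp at h0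
      have hk2pos : 0 < k2 ω.2.1 ω.2.2.2.2.1 := by
        rcases (hk20 ω.2.1 ω.2.2.2.2.1).lt_or_eq with h | h
        · exact h
        · rw [hfac, ← h] at h0; simp at h0
      have hk3pos : 0 < k3 ω.2.2.1 ω.2.2.2.2.2 := by
        rcases (hk30 ω.2.2.1 ω.2.2.2.2.2).lt_or_eq with h | h
        · exact h
        · rw [hfac, ← h] at h0; simp at h0
      -- positivity of the needed marginals
      have hQpos : 0 < margOf p (fun ω => (ω.2.2.2.1, ω.2.2.2.2.1, ω.2.2.2.2.2))
          (ω.2.2.2.1, ω.2.2.2.2.1, ω.2.2.2.2.2) :=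
        lt_of_lt_of_le h0 (self_le_margOf p hp0 _ ω)
      have hSpos : 0 < margOf p (fun ω => ω.2.2.2.1) ω.2.2.2.1 :=
        lt_of_lt_of_le h0 (self_le_margOf p hp0 _ ω)
      have hRpos : 0 < margOf p (fun ω => (ω.2.2.2.2.1, ω.2.2.2.2.2))
          (ω.2.2.2.2.1, ω.2.2.2.2.2) :=
        lt_of_lt_of_le h0 (self_le_margOf p hp0 _ ω)
      have hEpos : 0 < margOf p (fun ω => ((ω.2.2.2.2.1, ω.2.2.2.2.2), ω.1))
          ((ω.2.2.2.2.1, ω.2.2.2.2.2), ω.1) :=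
        lt_of_lt_of_le h0 (self_le_margOf p hp0 _ ω)
      have hHpos : 0 < margOf p (fun ω => (ω.2.2.2.1, (ω.2.1, ω.2.2.1)))
          (ω.2.2.2.1, (ω.2.1, ω.2.2.1)) :=
        lt_of_lt_of_le h0 (self_le_margOf p hp0 _ ω)
      -- rewrite all marginals
      rw [MC ω, MD, MI, MF, MJ, MA]
      rw [hfac]
      rw [Real.log_mul (by positivity) (ne_of_gt hk3pos),
          Real.log_mul (by positivity) (ne_of_gt hk2pos),
          Real.log_mul (ne_of_gt hpJpos) (ne_of_gt hk1pos),
          Real.log_mul (ne_of_gt hk1pos) (ne_of_gt hEpos),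
          Real.log_mul (by positivity) (ne_of_gt hHpos),
          Real.log_mul (ne_of_gt hk2pos) (ne_of_gt hk3pos),
          Real.log_div (ne_of_gt hQpos) (by positivity),
          Real.log_mul (ne_of_gt hSpos) (ne_of_gt hRpos)]
      ring
  rw [key]
  -- Gibbs inequality
  refine gibbs _ _ hQ0 (fun t => mul_nonneg (hS0 t.1) (hR0 t.2)) ?_ ?_ ?_
  · rw [sum_margOf]; exact hsum
  · have : ∑ t : U1 × U2 × U3,
        margOf p (fun ω => ω.2.2.2.1) t.1
          * margOf p (fun ω => (ω.2.2.2.2.1, ω.2.2.2.2.2)) t.2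
      = (∑ a, margOf p (fun ω => ω.2.2.2.1) a)
        * (∑ b, margOf p (fun ω => (ω.2.2.2.2.1, ω.2.2.2.2.2)) b) := by
      rw [Fintype.sum_prod_type, Finset.sum_mul]
      exact Finset.sum_congr rfl fun a _ => by rw [Finset.mul_sum]
    rw [this, sum_margOf, sum_margOf, hsum, mul_one]
  · rintro ⟨w1, v2, v3⟩ hq
    have h1 : margOf p (fun ω => (ω.2.2.2.1, ω.2.2.2.2.1, ω.2.2.2.2.2)) (w1, v2, v3)
        ≤ margOf p (fun ω => ω.2.2.2.1) w1 :=
      margOf_le_comp p hp0 (fun ω => (ω.2.2.2.1, ω.2.2.2.2.1, ω.2.2.2.2.2)) Prod.fst (w1, v2, v3)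
    have h2 : margOf p (fun ω => (ω.2.2.2.1, ω.2.2.2.2.1, ω.2.2.2.2.2)) (w1, v2, v3)
        ≤ margOf p (fun ω => (ω.2.2.2.2.1, ω.2.2.2.2.2)) (v2, v3) :=
      margOf_le_comp p hp0 (fun ω => (ω.2.2.2.1, ω.2.2.2.2.1, ω.2.2.2.2.2)) Prod.snd (w1, v2, v3)
    exact mul_pos (lt_of_lt_of_le hq h1) (lt_of_lt_of_le hq h2)
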